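/- For every x > 0, ψ'(x)·e^{ψ(x)} < 1, where ψ' is the derivative of the digamma function (the trigamma function). -/

import Mathlib

/-!
For `x > 0`, `ψ'(x) = ∑ₙ 1/(x+n)²`: differentiate `ψ(z) = lim_N (log N - ∑_{k<N} 1/(z+k))` termwise,
the limit coming from `ψ(z+1) = ψ(z) + 1/z` and the bounds `log (z-1) ≤ ψ(z) ≤ log z` that the
convexity of `log Γ` gives. Comparing `1/(t+1/2)²` with the telescoping differences of
`1/t - c/t³` yields `1/s - 1/(12s³) ≤ ψ'(s+1/2)` for `s > 0` and `ψ'(s+1/2) ≤ 1/s - 9/(208s³)` for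
`s ≥ 1/2`. By the lower bound `ψ(s+1/2) - log s - 1/(24s²)` increases to `0`, so
`e^{ψ(s+1/2)} ≤ s e^{1/(24s²)}`. For `x = s + 1/2 ≥ 1` the product is then at most
`(1 - 9/(208s²)) e^{1/(24s²)} < 1`, as `9/208 > 1/24`; for `x < 1` the recurrences shift the
problem to `x + 1` and leave `(1 + w + w²/2) e^{-47w/48} < 1` with `w = 1/x ≥ 1`.
-/

open Real Filter Set

/-- The digamma (psi) function: the logarithmic derivative of the gamma function. -/
noncomputable def psi (x : ℝ) : ℝ := deriv (fun t : ℝ => Real.log (Real.Gamma t)) x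

open Finset Topology

theorem differentiableAt_log_Gamma {x : ℝ} (hx : 0 < x) :
    DifferentiableAt ℝ (fun t => log (Gamma t)) x :=
  (differentiableAt_Gamma fun m h => by linarith [h ▸ hx, (m.cast_nonneg : (0 : ℝ) ≤ m)]).log
    (Gamma_pos_of_pos hx).ne'

theorem psi_add_one {x : ℝ} (hx : 0 < x) : psi (x + 1) = psi x + 1 / x := by
  rw [psi, psi, ← deriv_comp_add_const, one_div, ← deriv_log,
    ← deriv_add (differentiableAt_log_Gamma hx) (differentiableAt_log hx.ne')]
  refine EventuallyEq.deriv_eq ?_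
  filter_upwards [eventually_gt_nhds hx] with y hy
  rw [Pi.add_apply, Gamma_add_one hy.ne', log_mul hy.ne' (Gamma_pos_of_pos hy).ne', add_comm]

theorem psi_add_nat {x : ℝ} (hx : 0 < x) (N : ℕ) :
    psi (x + N) = psi x + ∑ k ∈ range N, 1 / (x + k) := by
  induction N with
  | zero => simp
  | succ n ih =>
    rw [Nat.cast_succ, ← add_assoc, psi_add_one (by positivity), ih, sum_range_succ, add_assoc]

theorem slope_log_Gamma_add_one {x : ℝ} (hx : 0 < x) :
    slope (log ∘ Gamma) x (x + 1) = log x := by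
  rw [slope_def_field, add_sub_cancel_left, div_one, Function.comp_apply, Function.comp_apply,
    Gamma_add_one hx.ne', log_mul hx.ne' (Gamma_pos_of_pos hx).ne', add_sub_cancel_right]

theorem psi_le_log {x : ℝ} (hx : 0 < x) : psi x ≤ log x :=
  slope_log_Gamma_add_one hx ▸ convexOn_log_Gamma.deriv_le_slope hx (mem_Ioi.mpr (by linarith))
    (lt_add_one x) (differentiableAt_log_Gamma hx)

theorem log_le_psi_add_one {x : ℝ} (hx : 0 < x) : log x ≤ psi (x + 1) :=
  slope_log_Gamma_add_one hx ▸ convexOn_log_Gamma.slope_le_deriv hx (mem_Ioi.mpr (by linarith))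
    (lt_add_one x) (differentiableAt_log_Gamma (by linarith))

theorem tendsto_psi_sub_log_atTop : Tendsto (fun x => psi x - log x) atTop (𝓝 0) := by
  refine tendsto_of_tendsto_of_tendsto_of_le_of_le' (tendsto_log_comp_add_sub_log (-1))
    tendsto_const_nhds ?_ ?_
  · filter_upwards [eventually_gt_atTop 1] with x hx
    have := log_le_psi_add_one (x := x + -1) (by linarith)
    rw [neg_add_cancel_right] at this
    linarith
  · filter_upwards [eventually_gt_atTop 0] with x hx
    linarith [psi_le_log hx]

theorem tendsto_log_sub_sum_one_div_add {z : ℝ} (hz : 0 < z) :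
    Tendsto (fun N : ℕ => log N - ∑ k ∈ range N, 1 / (z + k)) atTop (𝓝 (psi z)) := by
  have h : Tendsto (fun x : ℝ => psi (x + z) - log x) atTop (𝓝 0) := by
    simpa only [Function.comp_def, id, sub_add_sub_cancel, add_zero] using
      (tendsto_psi_sub_log_atTop.comp (tendsto_atTop_add_const_right _ z tendsto_id)).add
        (tendsto_log_comp_add_sub_log z)
  have := (tendsto_const_nhds (x := psi z)).sub (h.comp tendsto_natCast_atTop_atTop)
  rw [sub_zero] at this
  refine this.congr fun N => ?_
  rw [Function.comp_apply, add_comm (N : ℝ) z, psi_add_nat hz]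
  ring

theorem summable_one_div_add_nat_sq {x : ℝ} (hx : 0 < x) :
    Summable fun n : ℕ => 1 / (x + n) ^ 2 := by
  refine ((Real.summable_one_div_nat_add_rpow x 2).mpr one_lt_two).congr fun n => ?_
  rw [abs_of_pos (by positivity), Real.rpow_two, add_comm]

noncomputable def trigammaSeries (x : ℝ) : ℝ := ∑' n : ℕ, 1 / (x + n) ^ 2

theorem hasDerivAt_psi {x : ℝ} (hx : 0 < x) : HasDerivAt psi (trigammaSeries x) x := by
  have hx2 : 0 < x / 2 := half_pos hx
  have hderiv : ∀ (N : ℕ) (z : ℝ), 0 < z → HasDerivAt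
      (fun z : ℝ => log N - ∑ k ∈ range N, 1 / (z + k)) (∑ k ∈ range N, 1 / (z + k) ^ 2) z := by
    intro N z hz
    have hterm (k : ℕ) : HasDerivAt (fun z : ℝ => 1 / (z + k)) (-(1 / (z + k) ^ 2)) z := by
      simpa [one_div] using (hasDerivAt_inv (by positivity : z + k ≠ 0)).comp_add_const z (k : ℝ)
    simpa [sum_neg_distrib] using (HasDerivAt.fun_sum fun k _ => hterm k).const_sub (log N)
  have hunif : TendstoUniformlyOn (fun N : ℕ => fun z : ℝ => ∑ k ∈ range N, 1 / (z + k) ^ 2)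
      trigammaSeries atTop (Set.Ioi (x / 2)) := by
    refine tendstoUniformlyOn_tsum_nat (summable_one_div_add_nat_sq hx2) fun n z hz => ?_
    rw [norm_of_nonneg (by positivity)]
    gcongr
    exact hz.le
  exact hasDerivAt_of_tendstoUniformlyOn isOpen_Ioi hunif
    (Eventually.of_forall fun N z hz => hderiv N z (hx2.trans hz))
    (fun z hz => tendsto_log_sub_sum_one_div_add (hx2.trans hz)) (half_lt_self hx)

theorem hasSum_sub_add_one_of_antitone {b : ℕ → ℝ} {l : ℝ} (hb : Antitone b)
    (hlim : Tendsto b atTop (𝓝 l)) : HasSum (fun n => b n - b (n + 1)) (b 0 - l) := by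
  rw [hasSum_iff_tendsto_nat_of_nonneg (fun n => sub_nonneg.mpr (hb n.le_succ))]
  simp only [sum_range_sub']
  exact tendsto_const_nhds.sub hlim

theorem hasSum_one_div_add_nat_pow_sub {y : ℝ} (hy : 0 < y) {k : ℕ} (hk : k ≠ 0) :
    HasSum (fun n : ℕ => 1 / (y + n) ^ k - 1 / (y + n + 1) ^ k) (1 / y ^ k) := by
  have hlim : Tendsto (fun n : ℕ => 1 / (y + n) ^ k) atTop (𝓝 0) :=
    tendsto_const_nhds.div_atTop ((tendsto_pow_atTop hk).comp
      (tendsto_atTop_add_const_left _ y tendsto_natCast_atTop_atTop))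
  have hanti : Antitone fun n : ℕ => 1 / (y + n) ^ k := fun m n hmn => by
    dsimp only
    gcongr
  simpa [add_assoc] using hasSum_sub_add_one_of_antitone hanti hlim

theorem hasSum_one_div_sub_div_cube_telescope (c : ℝ) {y : ℝ} (hy : 0 < y) :
    HasSum (fun n : ℕ =>
        (1 / (y + n) - c / (y + n) ^ 3) - (1 / (y + n + 1) - c / (y + n + 1) ^ 3))
      (1 / y - c / y ^ 3) := by
  have h := (hasSum_one_div_add_nat_pow_sub hy one_ne_zero).sub
    ((hasSum_one_div_add_nat_pow_sub hy three_ne_zero).mul_left c)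
  rw [show 1 / y - c / y ^ 3 = 1 / y ^ 1 - c * (1 / y ^ 3) by ring]
  exact h.congr_fun fun n => by ring

-- Cleared of denominators, the difference is `(u - 3/4)(25u + 3)/208` with `u = t(t+1)`:
-- `9/208` is the largest constant for which the inequality survives at `t = 1/2`.
theorem one_div_add_half_sq_le {t : ℝ} (ht : 1 / 2 ≤ t) :
    1 / (t + 1 / 2) ^ 2 ≤ (1 / t - 9 / 208 / t ^ 3) - (1 / (t + 1) - 9 / 208 / (t + 1) ^ 3) := by
  have ht0 : 0 < t := by linarith
  have key : 0 ≤ (t * (t + 1) - 3 / 4) * (25 * (t * (t + 1)) + 3) := by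
    apply mul_nonneg <;> nlinarith
  rw [div_le_iff₀ (by positivity)]
  field_simp
  nlinarith

theorem le_one_div_add_half_sq {t : ℝ} (ht : 0 < t) :
    (1 / t - 1 / 12 / t ^ 3) - (1 / (t + 1) - 1 / 12 / (t + 1) ^ 3) ≤ 1 / (t + 1 / 2) ^ 2 := by
  rw [le_div_iff₀ (by positivity)]
  field_simp
  nlinarith [mul_pos ht (mul_pos ht ht)]

theorem trigammaSeries_add_half_le {s : ℝ} (hs : 1 / 2 ≤ s) :
    trigammaSeries (s + 1 / 2) ≤ 1 / s - 9 / 208 / s ^ 3 := by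
  refine hasSum_le (fun n => ?_) (summable_one_div_add_nat_sq (by linarith)).hasSum
    (hasSum_one_div_sub_div_cube_telescope _ (by linarith))
  rw [add_right_comm s (1 / 2)]
  exact one_div_add_half_sq_le (le_add_of_le_of_nonneg hs n.cast_nonneg)

theorem le_trigammaSeries_add_half {s : ℝ} (hs : 0 < s) :
    1 / s - 1 / 12 / s ^ 3 ≤ trigammaSeries (s + 1 / 2) := by
  refine hasSum_le (fun n => ?_) (hasSum_one_div_sub_div_cube_telescope _ hs)
    (summable_one_div_add_nat_sq (by linarith)).hasSum
  rw [add_right_comm s (1 / 2)]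
  exact le_one_div_add_half_sq (by positivity)

theorem hasDerivAt_psi_add_half_sub_log {s : ℝ} (hs : 0 < s) :
    HasDerivAt (fun s => psi (s + 1 / 2) - log s - 1 / 24 / s ^ 2)
      (trigammaSeries (s + 1 / 2) - (1 / s - 1 / 12 / s ^ 3)) s := by
  have h := (((hasDerivAt_psi (by linarith : 0 < s + 1 / 2)).comp_add_const s (1 / 2)).sub
    (hasDerivAt_log hs.ne')).sub ((hasDerivAt_const s (1 / 24 : ℝ)).div (hasDerivAt_pow 2 s)
      (by positivity))
  exact h.congr_deriv (by field_simp; ring)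

theorem tendsto_psi_add_half_sub_log :
    Tendsto (fun s => psi (s + 1 / 2) - log s - 1 / 24 / s ^ 2) atTop (𝓝 0) := by
  have hcorr : Tendsto (fun s : ℝ => 1 / 24 / s ^ 2) atTop (𝓝 0) :=
    tendsto_const_nhds.div_atTop (tendsto_pow_atTop two_ne_zero)
  have h := ((tendsto_psi_sub_log_atTop.comp
    (tendsto_atTop_add_const_right _ (1 / 2) tendsto_id)).add
      (tendsto_log_comp_add_sub_log (1 / 2))).sub hcorr
  simpa only [Function.comp_def, id, sub_add_sub_cancel, add_zero, sub_zero] using h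

theorem psi_add_half_le {s : ℝ} (hs : 0 < s) : psi (s + 1 / 2) ≤ log s + 1 / 24 / s ^ 2 := by
  have hmono : MonotoneOn (fun s => psi (s + 1 / 2) - log s - 1 / 24 / s ^ 2) (Ioi 0) := by
    refine monotoneOn_of_hasDerivWithinAt_nonneg
      (f' := fun t => trigammaSeries (t + 1 / 2) - (1 / t - 1 / 12 / t ^ 3)) (convex_Ioi 0)
      (fun t ht => (hasDerivAt_psi_add_half_sub_log ht).continuousAt.continuousWithinAt)
      (fun t ht => ?_) (fun t ht => ?_)
    · rw [interior_Ioi] at ht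
      exact (hasDerivAt_psi_add_half_sub_log ht).hasDerivWithinAt
    · rw [interior_Ioi] at ht
      exact sub_nonneg.mpr (le_trigammaSeries_add_half ht)
  have : psi (s + 1 / 2) - log s - 1 / 24 / s ^ 2 ≤ 0 :=
    ge_of_tendsto tendsto_psi_add_half_sub_log <| by
      filter_upwards [eventually_ge_atTop s] with t ht
      exact hmono hs (hs.trans_le ht) ht
  linarith

theorem trigammaSeries_eq_one_div_sq_add {x : ℝ} (hx : 0 < x) :
    trigammaSeries x = 1 / x ^ 2 + trigammaSeries (x + 1) := by
  rw [trigammaSeries, (summable_one_div_add_nat_sq hx).tsum_eq_zero_add, trigammaSeries]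
  push_cast
  simp only [add_zero, add_assoc, add_comm (1 : ℝ)]

theorem exp_psi_add_half_le {s : ℝ} (hs : 0 < s) :
    exp (psi (s + 1 / 2)) ≤ s * exp (1 / 24 / s ^ 2) := by
  calc exp (psi (s + 1 / 2)) ≤ exp (log s + 1 / 24 / s ^ 2) := exp_le_exp.mpr (psi_add_half_le hs)
    _ = s * exp (1 / 24 / s ^ 2) := by rw [exp_add, exp_log hs]

theorem one_sub_mul_exp_lt_one {a b : ℝ} (hab : a < b) : (1 - b) * exp a < 1 := by
  calc (1 - b) * exp a ≤ exp (-b) * exp a := by gcongr; linarith [add_one_le_exp (-b)]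
    _ = exp (a - b) := by rw [← exp_add, neg_add_eq_sub]
    _ < 1 := exp_lt_one_iff.mpr (by linarith)

theorem one_add_add_sq_div_two_lt_exp {w : ℝ} (hw : 1 ≤ w) :
    1 + w + w ^ 2 / 2 < exp (47 / 48 * w) := by
  have h := sum_le_exp_of_nonneg (by positivity : 0 ≤ 47 / 48 * w) 4
  norm_num [sum_range_succ, Nat.factorial] at h
  nlinarith [pow_le_pow_right₀ hw (by norm_num : 1 ≤ 3), pow_le_pow_right₀ hw (by norm_num : 2 ≤ 3)]

theorem trigamma_mul_exp_psi_lt_one_of_one_le {x : ℝ} (hx : 1 ≤ x) :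
    deriv psi x * exp (psi x) < 1 := by
  obtain ⟨s, hs, rfl⟩ : ∃ s, 1 / 2 ≤ s ∧ x = s + 1 / 2 := ⟨x - 1 / 2, by linarith, by ring⟩
  have hs0 : 0 < s := by linarith
  rw [(hasDerivAt_psi (by linarith)).deriv]
  calc trigammaSeries (s + 1 / 2) * exp (psi (s + 1 / 2))
      ≤ (1 / s - 9 / 208 / s ^ 3) * (s * exp (1 / 24 / s ^ 2)) :=
        mul_le_mul_of_nonneg (trigammaSeries_add_half_le hs) (exp_psi_add_half_le hs0)
          (tsum_nonneg fun _ => by positivity) (by positivity)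
    _ = (1 - 9 / 208 / s ^ 2) * exp (1 / 24 / s ^ 2) := by field_simp
    _ < 1 := one_sub_mul_exp_lt_one (div_lt_div_of_pos_right (by norm_num) (by positivity))

theorem trigamma_mul_exp_psi_lt_one_of_lt_one {x : ℝ} (hx0 : 0 < x) (hx1 : x < 1) :
    deriv psi x * exp (psi x) < 1 := by
  obtain ⟨s, hs⟩ : ∃ s, s = x + 1 / 2 := ⟨_, rfl⟩
  have hs0 : 0 < s := by linarith
  have hxs : x + 1 = s + 1 / 2 := by linarith
  have hderiv : deriv psi x = 1 / x ^ 2 + trigammaSeries (s + 1 / 2) := by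
    rw [(hasDerivAt_psi hx0).deriv, trigammaSeries_eq_one_div_sq_add hx0, hxs]
  have hpsi : psi x = psi (s + 1 / 2) + -(1 / x) := by
    rw [← hxs, psi_add_one hx0]
    ring
  have hS : trigammaSeries (s + 1 / 2) ≤ 1 / s :=
    (trigammaSeries_add_half_le (by linarith)).trans (sub_le_self _ (by positivity))
  have hcorr : 1 / 24 / s ^ 2 + -(1 / x) ≤ -(47 / 48 * (1 / x)) := by
    have h2x : 2 * x ≤ s ^ 2 := by nlinarith [sq_nonneg (x - 1 / 2)]
    have : 1 / 24 / s ^ 2 ≤ 1 / 24 / (2 * x) := by gcongr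
    linarith [show 1 / 24 / (2 * x) = 1 / 48 * (1 / x) by ring]
  calc deriv psi x * exp (psi x)
      = (1 / x ^ 2 + trigammaSeries (s + 1 / 2)) * (exp (psi (s + 1 / 2)) * exp (-(1 / x))) := by
        rw [hderiv, hpsi, exp_add]
    _ ≤ (1 / x ^ 2 + 1 / s) * (s * exp (1 / 24 / s ^ 2) * exp (-(1 / x))) := by
        gcongr
        exact exp_psi_add_half_le hs0
    _ = (1 + 1 / x + (1 / x) ^ 2 / 2) * exp (1 / 24 / s ^ 2 + -(1 / x)) := by
        rw [exp_add, hs]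
        field_simp
        ring
    _ ≤ (1 + 1 / x + (1 / x) ^ 2 / 2) * exp (-(47 / 48 * (1 / x))) := by gcongr
    _ < 1 := by
        rw [exp_neg, ← div_eq_mul_inv, div_lt_one (exp_pos _)]
        exact one_add_add_sq_div_two_lt_exp (by rw [le_div_iff₀ hx0]; linarith)

theorem trigamma_mul_exp_psi_lt_one (x : ℝ) (hx : 0 < x) :
    deriv psi x * Real.exp (psi x) < 1 := by
  rcases lt_or_ge x 1 with hx1 | hx1
  · exact trigamma_mul_exp_psi_lt_one_of_lt_one hx hx1
  · exact trigamma_mul_exp_psi_lt_one_of_one_le hx1
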